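/- arXiv:2302.02102 — 3 statements merged into one kernel-verified Lean document; each statement's English description precedes it below -/
import Mathlib

section
/- Let x : V × V → Bool with V = Fin (n+1) satisfy: each vertex has exactly one successor (∀ i, exactly one j with x (i,j) = true), each vertex has exactly one predecessor, no self-loops (x (i,i) = false for all i), and for every nonempty proper subset S ⊊ V there exist i ∈ S, j ∉ S with x (i,j) = true. Then the function f : V → V sending each i to its unique successor is a cyclic permutation of V (a single cycle of length n+1). -/
/-- Correctness of the subtour-elimination TSP formulation: the degree
constraints (exactly one successor and predecessor per vertex), no self-loops,
and the cut constraints (every nonempty proper subset has an outgoing arc)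
force the successor function `f` to be a single Hamiltonian cycle on
`V = Fin (n+1)`: `f` is a bijection and iterating `f` from any vertex reaches
every vertex. -/
theorem tsp_constraints_give_cyclic_perm (n : ℕ)
    (x : Fin (n + 1) × Fin (n + 1) → Bool)
    (hsucc : ∀ i : Fin (n + 1), ∃! j : Fin (n + 1), x (i, j) = true)
    (hpred : ∀ j : Fin (n + 1), ∃! i : Fin (n + 1), x (i, j) = true)
    (hself : ∀ i : Fin (n + 1), x (i, i) = false)
    (hcut : ∀ S : Finset (Fin (n + 1)), S.Nonempty → S ≠ Finset.univ →
      ∃ i ∈ S, ∃ j ∉ S, x (i, j) = true)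
    (f : Fin (n + 1) → Fin (n + 1))
    (hf : ∀ i : Fin (n + 1), x (i, f i) = true) :
    Function.Bijective f ∧ ∀ i j : Fin (n + 1), ∃ k : ℕ, f^[k] i = j := by
  have hinj : Function.Injective f := by
    intro a b hab
    obtain ⟨c, hc, hu⟩ := hpred (f a)
    have ha := hu a (hf a)
    have hb := hu b (by rw [hab] at *; exact hf b)
    rw [ha, hb]
  refine ⟨Finite.injective_iff_bijective.mp hinj, ?_⟩
  intro i j
  classical
  set S : Finset (Fin (n + 1)) := Finset.univ.filter (fun j => ∃ k : ℕ, f^[k] i = j) with hS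
  have hmem : ∀ a, a ∈ S ↔ ∃ k : ℕ, f^[k] i = a := by
    intro a; simp [hS]
  have hSuniv : S = Finset.univ := by
    by_contra hne
    have hnonempty : S.Nonempty := ⟨i, (hmem i).mpr ⟨0, rfl⟩⟩
    obtain ⟨a, haS, b, hbS, hab⟩ := hcut S hnonempty hne
    obtain ⟨k, hk⟩ := (hmem a).mp haS
    have : b = f a := by
      obtain ⟨c, hc, hu⟩ := hsucc a
      rw [hu b hab, hu (f a) (hf a)]
    apply hbS
    rw [hmem, this, ← hk]
    exact ⟨k + 1, Function.iterate_succ_apply' f k i⟩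
  have := (hmem j).mp (hSuniv ▸ Finset.mem_univ j)
  exact this
end

section
/- Conversely, if f : Fin (n+1) → Fin (n+1) is a cyclic permutation with no fixed points (n ≥ 1), then the indicator x(i,j) = (f i = j) satisfies all the TSP constraints: unique successor and predecessor for each vertex, no self-loops, and for every nonempty proper subset S there is an arc leaving S. -/
/-- Conversely, a fixed-point-free cyclic permutation `f` of `Fin (n+1)`
(with `n ≥ 1`) induces via `x (i, j) = decide (f i = j)` a solution of all the
TSP constraints: unique successor and predecessor per vertex, no self-loops,
and an arc leaving every nonempty proper subset. -/
theorem cyclic_perm_satisfies_tsp_constraints (n : ℕ) (hn : 1 ≤ n)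
    (f : Fin (n + 1) → Fin (n + 1))
    (hbij : Function.Bijective f)
    (hcyc : ∀ i j : Fin (n + 1), ∃ k : ℕ, f^[k] i = j)
    (hnofix : ∀ i : Fin (n + 1), f i ≠ i)
    (x : Fin (n + 1) × Fin (n + 1) → Bool)
    (hx : ∀ p : Fin (n + 1) × Fin (n + 1), x p = decide (f p.1 = p.2)) :
    (∀ i : Fin (n + 1), ∃! j : Fin (n + 1), x (i, j) = true) ∧
    (∀ j : Fin (n + 1), ∃! i : Fin (n + 1), x (i, j) = true) ∧
    (∀ i : Fin (n + 1), x (i, i) = false) ∧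
    (∀ S : Finset (Fin (n + 1)), S.Nonempty → S ≠ Finset.univ →
      ∃ i ∈ S, ∃ j ∉ S, x (i, j) = true) := by
  refine ⟨?_, ?_, ?_, ?_⟩
  · intro i
    exact ⟨f i, by simp [hx], fun j hj => by simpa [hx, eq_comm] using hj⟩
  · intro j
    obtain ⟨i, hi⟩ := hbij.surjective j
    refine ⟨i, by simp [hx, hi], fun k hk => ?_⟩
    exact hbij.injective (by rw [hi]; simpa [hx] using hk)
  · intro i
    simp [hx, hnofix i]
  · intro S hne hS
    by_contra h
    push_neg at h
    have hclosed : ∀ i ∈ S, f i ∈ S := by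
      intro i hi
      by_contra hfi
      exact absurd (by simp [hx]) (h i hi (f i) hfi)
    obtain ⟨i, hi⟩ := hne
    have hall : ∀ k : ℕ, f^[k] i ∈ S := by
      intro k
      induction k with
      | zero => simpa
      | succ k ih => rw [Function.iterate_succ_apply']; exact hclosed _ ih
    apply hS
    ext j
    simp only [Finset.mem_univ, iff_true]
    obtain ⟨k, hk⟩ := hcyc i j
    exact hk ▸ hall k
end

section
/- If a list of stops L is 'zone-contiguous' (i.e., the list of zones L.map z is a concatenation of nonempty constant blocks with pairwise distinct block values), then the length of the zone sequence (first-appearance deduplication of L.map z) equals the number of blocks, and reversing L yields a zone sequence equal to the reverse of the original zone sequence. -/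
/-! A concatenation of nonempty constant runs with pairwise distinct values deduplicates, from
either end, to its list of run values, and reversing the list reverses the runs. -/

/-- First-appearance deduplication of a list: keeps the first occurrence of
each element, in order of first appearance. -/
def firstDedup {α : Type*} [DecidableEq α] (L : List α) : List α :=
  L.reverse.dedup.reverse

namespace List

theorem reverse_flatten_replicate {α : Type*} (blocks : List (α × ℕ)) :
    (blocks.map fun b => replicate b.2 b.1).flatten.reverse =
      (blocks.reverse.map fun b => replicate b.2 b.1).flatten := by
  simp only [reverse_flatten, map_map, ← map_reverse, Function.comp_def, reverse_replicate]

variable {α : Type*} [DecidableEq α]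

theorem dedup_replicate_append {k : ℕ} (hk : 0 < k) {a : α} {l : List α} (ha : a ∉ l) :
    (replicate k a ++ l).dedup = a :: l.dedup := by
  obtain ⟨n, rfl⟩ := Nat.exists_eq_add_of_lt hk
  rw [replicate_succ', append_assoc, singleton_append, dedup_append,
    dedup_cons_of_notMem ha, Subset.union_eq_right]
  intro x hx
  rw [eq_of_mem_replicate hx]
  exact mem_cons_self

theorem dedup_flatten_replicate {blocks : List (α × ℕ)} (hpos : ∀ b ∈ blocks, 0 < b.2)
    (hdistinct : (blocks.map Prod.fst).Nodup) :
    (blocks.map fun b => replicate b.2 b.1).flatten.dedup = blocks.map Prod.fst := by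
  induction blocks with
  | nil => rfl
  | cons b bs ih =>
    rw [map_cons, nodup_cons] at hdistinct
    have hfresh : b.1 ∉ (bs.map fun b => replicate b.2 b.1).flatten := by
      simp only [mem_flatten, mem_map]
      rintro ⟨_, ⟨c, hc, rfl⟩, hmem⟩
      exact hdistinct.1 (mem_map.2 ⟨c, hc, (eq_of_mem_replicate hmem).symm⟩)
    rw [map_cons, flatten_cons, dedup_replicate_append (hpos b mem_cons_self) hfresh,
      ih (fun c hc => hpos c (mem_cons_of_mem _ hc)) hdistinct.2, map_cons]

end List

open List in
theorem firstDedup_flatten_replicate {α : Type*} [DecidableEq α] {blocks : List (α × ℕ)}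
    (hpos : ∀ b ∈ blocks, 0 < b.2) (hdistinct : (blocks.map Prod.fst).Nodup) :
    firstDedup (blocks.map fun b => replicate b.2 b.1).flatten = blocks.map Prod.fst := by
  rw [firstDedup, reverse_flatten_replicate,
    dedup_flatten_replicate (fun b hb => hpos b (mem_reverse.1 hb))
      (by rwa [map_reverse, nodup_reverse]),
    map_reverse, reverse_reverse]

/-- If a list of stops is zone-contiguous (its zone labels form a concatenation
of nonempty constant blocks with pairwise distinct block values), then the
zone sequence has length equal to the number of blocks, and the zone sequence
of the reversed list is the reverse of the zone sequence. -/
theorem zone_contiguous_zone_sequence {Stop Zone : Type*} [DecidableEq Zone]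
    (L : List Stop) (z : Stop → Zone) (blocks : List (Zone × ℕ))
    (hpos : ∀ b ∈ blocks, 0 < b.2)
    (hdistinct : (blocks.map Prod.fst).Nodup)
    (hblocks : L.map z = (blocks.map (fun b => List.replicate b.2 b.1)).flatten) :
    (firstDedup (L.map z)).length = blocks.length ∧
    firstDedup (L.reverse.map z) = (firstDedup (L.map z)).reverse := by
  have hseq : firstDedup (L.map z) = blocks.map Prod.fst := by
    rw [hblocks, firstDedup_flatten_replicate hpos hdistinct]
  have hseq_rev : firstDedup (L.reverse.map z) = blocks.reverse.map Prod.fst := by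
    rw [List.map_reverse, hblocks, List.reverse_flatten_replicate,
      firstDedup_flatten_replicate (fun b hb => hpos b (List.mem_reverse.1 hb))
        (by rwa [List.map_reverse, List.nodup_reverse])]
  exact ⟨by rw [hseq, List.length_map], by rw [hseq_rev, hseq, List.map_reverse]⟩
end
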